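/- For every consistent layered automaton A over a finite alphabet Σ, the simple-by-priorities alternating parity automaton ⟦A⟧ is 0-1 probabilistic: for every infinite word w, the random walk of ⟦A⟧ over w from the initial state produces a run satisfying the parity condition with probability 1 if w ∈ L(⟦A⟧), and with probability 0 if w ∉ L(⟦A⟧). -/

import Mathlib

open scoped Classical

noncomputable section

/-! ### Infinite words and the parity condition -/

/-- The minimal value occurring infinitely often in a sequence of priorities;
for (eventually) bounded sequences this is the `liminf`. -/
def minInfOften (pi : ℕ → ℕ) : ℕ := sInf {x : ℕ | ∀ N : ℕ, ∃ n : ℕ, N ≤ n ∧ pi n = x}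

/-- The (min-)parity acceptance condition: the liminf of the priorities is even. -/
def ParityAccept (pi : ℕ → ℕ) : Prop := Even (minInfOften pi)

/-- Prepend a finite word to an infinite word. -/
def prependW {α : Type} (u : List α) (w : ℕ → α) : ℕ → α := fun i =>
  if h : i < u.length then u.get ⟨i, h⟩ else w (i - u.length)

/-- The prefix of length `n` of an infinite word, as a list. -/
def wordPrefix {α : Type} (w : ℕ → α) (n : ℕ) : List α := List.ofFn (fun i : Fin n => w i)

/-- Drop the first `n` letters of an infinite word. -/
def wordDrop {α : Type} (w : ℕ → α) (n : ℕ) : ℕ → α := fun i => w (n + i)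

/-- The periodic infinite word `v^ω` (junk if `v = []`). -/
def perWord {α : Type} [Inhabited α] (v : List α) : ℕ → α := fun i => v.getD (i % v.length) default

/-! ### Layered automata -/

/-- A layered automaton over the alphabet `α` with `d` layers.  The (disjoint) layers
are encoded by the function `layer : Q → [1,d]`; each layer is a deterministic
transition system (partial transition function `δ`, which stays inside the layer);
`μ` sends each state of layer `x+1` to its parent in layer `x` (and is the identity
on layer `1`) and is a morphism of transition systems; layer `1` is complete, carries
the initial state, and all its states are reachable from the initial state. -/
structure Layered (Q α : Type) (d : ℕ) where
  layer : Q → ℕ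
  layer_pos : ∀ q, 1 ≤ layer q
  layer_le : ∀ q, layer q ≤ d
  δ : Q → α → Option Q
  δ_layer : ∀ q a q', δ q a = some q' → layer q' = layer q
  μ : Q → Q
  μ_layer : ∀ q, 1 < layer q → layer (μ q) + 1 = layer q
  μ_id : ∀ q, layer q = 1 → μ q = q
  μ_morph : ∀ q a q', 1 < layer q → δ q a = some q' → δ (μ q) a = some (μ q')
  init : Q
  init_layer : layer init = 1
  complete1 : ∀ q a, layer q = 1 → (δ q a).isSome = true
  reach1 : ∀ q, layer q = 1 →
    Relation.ReflTransGen (fun p p' => layer p = 1 ∧ ∃ a, δ p a = some p') init q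

namespace Layered

variable {Q R α : Type} {d d' : ℕ}

/-- The run of the (deterministic) layer transition systems on a finite word. -/
def runList (A : Layered Q α d) : Q → List α → Option Q
  | q, [] => some q
  | q, a :: u =>
    match A.δ q a with
    | some q' => runList A q' u
    | none => none

/-- `μ̂_x q`: the ancestor of `q` in layer `x` (image under the composed morphisms). -/
def muHat (A : Layered Q α d) (x : ℕ) (q : Q) : Q := (A.μ)^[A.layer q - x] q

/-- A leaf state: a state that is not in the image of any of the morphisms `μ_x`. -/
def IsLeaf (A : Layered Q α d) (q : Q) : Prop := ∀ p, 1 < A.layer p → A.μ p ≠ q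

/-- `layer(q,a)`: the largest layer `x ≤ layer q` in which `δ_x (μ̂_x q) a` is defined. -/
def layerOf (A : Layered Q α d) (q : Q) (a : α) : ℕ :=
  Nat.findGreatest (fun x => (A.δ (A.muHat x q) a).isSome = true) (A.layer q)

/-- A state `p` is an ancestor of `q`. -/
def IsAncestor (A : Layered Q α d) (p q : Q) : Prop :=
  A.layer p ≤ A.layer q ∧ A.muHat (A.layer p) q = p

/-! #### Safe languages and strong acceptance -/

/-- Membership of a finite word in the `x`-safe language of `q`. -/
def SafeFin (A : Layered Q α d) (x : ℕ) (q : Q) (u : List α) : Prop :=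
  (A.runList (A.muHat x q) u).isSome = true

/-- Membership of an infinite word in the `x`-safe language of `q`. -/
def SafeInf (A : Layered Q α d) (x : ℕ) (q : Q) (w : ℕ → α) : Prop :=
  ∀ n : ℕ, A.SafeFin x q (wordPrefix w n)

/-- `w` is strongly accepted by the state `p` (which lies in the even layer `x = layer p`):
`w` is `x`-safe from `p` and no decomposition `w = u·w'` admits a state `p'` of layer `x+1`
with a `u`-run from `p` to the parent of `p'` in `T_x` such that `w'` is `(x+1)`-safe from `p'`. -/
def StronglyAcc (A : Layered Q α d) (p : Q) (w : ℕ → α) : Prop :=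
  Even (A.layer p) ∧ A.SafeInf (A.layer p) p w ∧
  ∀ (n : ℕ) (p' : Q), A.layer p' = A.layer p + 1 →
    A.runList p (wordPrefix w n) = some (A.μ p') →
    ¬ A.SafeInf (A.layer p') p' (wordDrop w n)

/-- `w` is strongly rejected by `p` (lying in an odd layer). -/
def StronglyRej (A : Layered Q α d) (p : Q) (w : ℕ → α) : Prop :=
  Odd (A.layer p) ∧ A.SafeInf (A.layer p) p w ∧
  ∀ (n : ℕ) (p' : Q), A.layer p' = A.layer p + 1 →
    A.runList p (wordPrefix w n) = some (A.μ p') →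
    ¬ A.SafeInf (A.layer p') p' (wordDrop w n)

/-- Consistency: no two states with the same layer-1 ancestor strongly accept
resp. strongly reject a common infinite word. -/
def Consistent (A : Layered Q α d) : Prop :=
  ¬ ∃ (p p' : Q) (w : ℕ → α), A.muHat 1 p = A.muHat 1 p' ∧
      A.StronglyAcc p w ∧ A.StronglyRej p' w

/-- `w` is ultimately safe in layer `x`, for the automaton started in the
layer-1 state `q0`. -/
def UltSafeFrom (A : Layered Q α d) (q0 : Q) (x : ℕ) (w : ℕ → α) : Prop :=
  ∃ (n : ℕ) (p : Q), A.layer p = x ∧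
    A.runList q0 (wordPrefix w n) = some (A.muHat 1 p) ∧
    A.SafeInf x p (wordDrop w n)

/-- Layered acceptance from `q0`: the maximal layer in which `w` is ultimately safe is even. -/
def LayeredAcceptFrom (A : Layered Q α d) (q0 : Q) (w : ℕ → α) : Prop :=
  ∃ x : ℕ, Even x ∧ A.UltSafeFrom q0 x w ∧ ∀ y : ℕ, A.UltSafeFrom q0 y w → y ≤ x

/-- Layered rejection from `q0`: the maximal layer in which `w` is ultimately safe is odd. -/
def LayeredRejectFrom (A : Layered Q α d) (q0 : Q) (w : ℕ → α) : Prop :=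
  ∃ x : ℕ, Odd x ∧ A.UltSafeFrom q0 x w ∧ ∀ y : ℕ, A.UltSafeFrom q0 y w → y ≤ x

/-! #### The semantics automaton `⟦A⟧` (a simple-by-priorities alternating parity automaton) -/

/-- The priority of the letter `a` in the state `q` of `⟦A⟧`. -/
def semPrio (A : Layered Q α d) (q : Q) (a : α) : ℕ := A.layerOf q a

/-- The transitions of `⟦A⟧` (between leaf states): `q —a→ q'` iff, for
`x = layer(q,a)`, we have `δ_x (μ̂_x q) a = μ̂_x q'`; the transition carries priority `x`. -/
def semStep (A : Layered Q α d) (q : Q) (a : α) (q' : Q) : Prop :=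
  A.IsLeaf q' ∧ A.δ (A.muHat (A.layerOf q a) q) a = some (A.muHat (A.layerOf q a) q')

/-- Runs of `⟦A⟧` over the infinite word `w`, starting in `p`. -/
def IsSemRun (A : Layered Q α d) (w : ℕ → α) (p : Q) (ρ : ℕ → Q) : Prop :=
  ρ 0 = p ∧ ∀ i : ℕ, A.semStep (ρ i) (w i) (ρ (i + 1))

/-- The sequence of priorities produced by a run of `⟦A⟧` over `w`. -/
def runPrios (A : Layered Q α d) (w : ℕ → α) (ρ : ℕ → Q) : ℕ → ℕ :=
  fun i => A.semPrio (ρ i) (w i)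

/-- A resolver for Eve in `⟦A⟧`: given the history (the finite run so far, as a list of
(state, letter) pairs), the current state and a letter of odd priority, it picks a successor. -/
def EveResolver (A : Layered Q α d) (σ : List (Q × α) → Q → α → Q) : Prop :=
  ∀ (h : List (Q × α)) (q : Q) (a : α), Odd (A.semPrio q a) → A.semStep q a (σ h q a)

/-- A resolver for Adam in `⟦A⟧` (resolving the even-priority steps). -/
def AdamResolver (A : Layered Q α d) (τ : List (Q × α) → Q → α → Q) : Prop :=
  ∀ (h : List (Q × α)) (q : Q) (a : α), Even (A.semPrio q a) → A.semStep q a (τ h q a)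

/-- A run is consistent with the Eve-resolver `σ`: every odd-priority step follows `σ`. -/
def ConsEve (A : Layered Q α d) (σ : List (Q × α) → Q → α → Q) (w : ℕ → α) (ρ : ℕ → Q) : Prop :=
  ∀ i : ℕ, Odd (A.semPrio (ρ i) (w i)) →
    ρ (i + 1) = σ (List.ofFn fun j : Fin i => (ρ (j : ℕ), w (j : ℕ))) (ρ i) (w i)

/-- A run is consistent with the Adam-resolver `τ`: every even-priority step follows `τ`. -/
def ConsAdam (A : Layered Q α d) (τ : List (Q × α) → Q → α → Q) (w : ℕ → α) (ρ : ℕ → Q) : Prop :=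
  ∀ i : ℕ, Even (A.semPrio (ρ i) (w i)) →
    ρ (i + 1) = τ (List.ofFn fun j : Fin i => (ρ (j : ℕ), w (j : ℕ))) (ρ i) (w i)

/-- Acceptance of `w` by `⟦A⟧` from the (leaf) state `p`: Eve has a winning strategy
in the game `G(⟦A⟧,w)`, i.e. a resolver all of whose consistent runs satisfy parity. -/
def SemAccept (A : Layered Q α d) (p : Q) (w : ℕ → α) : Prop :=
  ∃ σ : List (Q × α) → Q → α → Q, A.EveResolver σ ∧
    ∀ ρ : ℕ → Q, A.IsSemRun w p ρ → A.ConsEve σ w ρ → ParityAccept (A.runPrios w ρ)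

/-- Uniform semantic determinism: leaf states with the same layer-1 ancestor
recognise the same language in `⟦A⟧`. -/
def UnifSD (A : Layered Q α d) : Prop :=
  ∀ p q : Q, A.IsLeaf p → A.IsLeaf q → A.muHat 1 p = A.muHat 1 q →
    ∀ w : ℕ → α, (A.SemAccept p w ↔ A.SemAccept q w)

/-! #### Longest suffix resolvers -/

/-- `v` is a suffix-witness to `r`: the layer of `r` has a run labelled `v` ending in `r`. -/
def suffixReaches (A : Layered Q α d) (r : Q) (v : List α) : Prop :=
  ∃ p : Q, A.layer p = A.layer r ∧ A.runList p v = some r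

/-- The length of the longest suffix `v` of `u` such that the layer of `r` has a
run labelled `v` ending in `r`. -/
def longestSuffixLen (A : Layered Q α d) (u : List α) (r : Q) : ℕ :=
  Nat.findGreatest (fun k => k ≤ u.length ∧ A.suffixReaches r (u.drop (u.length - k))) u.length

/-- A longest suffix resolver for Eve, initialised to `u0`: a valid Eve-resolver that,
at a step of odd priority `x` after having read `v`, moves to an `a`-successor `q'`
maximising the length of the longest `(x+1)`-suffix of `u0·v·a` to `μ̂_{x+1} q'`. -/
def IsLongestSuffixResolverE (A : Layered Q α d) (u0 : List α)
    (σ : List (Q × α) → Q → α → Q) : Prop :=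
  A.EveResolver σ ∧
  ∀ (h : List (Q × α)) (q : Q) (a : α), Odd (A.semPrio q a) →
    ∀ q' : Q, A.semStep q a q' →
      A.longestSuffixLen (u0 ++ h.map Prod.snd ++ [a]) (A.muHat (A.semPrio q a + 1) q') ≤
      A.longestSuffixLen (u0 ++ h.map Prod.snd ++ [a]) (A.muHat (A.semPrio q a + 1) (σ h q a))

/-- A longest suffix resolver for Adam, initialised to `u0` (symmetric, for even priorities). -/
def IsLongestSuffixResolverA (A : Layered Q α d) (u0 : List α)
    (τ : List (Q × α) → Q → α → Q) : Prop :=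
  A.AdamResolver τ ∧
  ∀ (h : List (Q × α)) (q : Q) (a : α), Even (A.semPrio q a) →
    ∀ q' : Q, A.semStep q a q' →
      A.longestSuffixLen (u0 ++ h.map Prod.snd ++ [a]) (A.muHat (A.semPrio q a + 1) q') ≤
      A.longestSuffixLen (u0 ++ h.map Prod.snd ++ [a]) (A.muHat (A.semPrio q a + 1) (τ h q a))

/-! #### The random walk on `⟦A⟧` -/

/-- The uniform step probability of the random walk of `⟦A⟧`. -/
def stepProb (A : Layered Q α d) (q : Q) (a : α) (q' : Q) : ENNReal :=
  if A.semStep q a q' then ((Nat.card {p : Q // A.semStep q a p} : ENNReal))⁻¹ else 0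

/-- `m` is the Markov measure of the random walk of `⟦A⟧` over the word `w` started at `p`:
a probability measure on `ℕ → Q` whose cylinder probabilities are the products of the
uniform step probabilities. -/
def IsWalkMeasure [MeasurableSpace Q] (A : Layered Q α d) (w : ℕ → α) (p : Q)
    (m : MeasureTheory.Measure (ℕ → Q)) : Prop :=
  MeasureTheory.IsProbabilityMeasure m ∧
  ∀ (n : ℕ) (s : Fin (n + 1) → Q),
    m {ρ : ℕ → Q | ∀ i : Fin (n + 1), ρ (i : ℕ) = s i} =
      (if s 0 = p then 1 else 0) *
        ∏ i : Fin n, A.stepProb (s i.castSucc) (w (i : ℕ)) (s i.succ)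

/-! #### Normal form, centrality, safe minimality, central sequences -/

/-- Normal form: (N1) every layer `x ≥ 2` is a union of non-trivial SCCs, and
(N2) the safe language of every child is strictly smaller than that of its parent. -/
def NormalForm (A : Layered Q α d) : Prop :=
  ∀ q : Q, 2 ≤ A.layer q →
    (∀ (u : List α) (q' : Q), A.runList q u = some q' →
      ∃ v : List α, v ≠ [] ∧ A.runList q' v = some q) ∧
    (∀ p : Q, 1 < A.layer p → A.μ p = q →
      ∃ u : List α, (A.runList q u).isSome = true ∧ A.runList p u = none)

/-- Inclusion of `x`-safe languages. -/
def SafeLE (A : Layered Q α d) (x : ℕ) (p q : Q) : Prop :=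
  (∀ u : List α, A.SafeFin x p u → A.SafeFin x q u) ∧
  (∀ w : ℕ → α, A.SafeInf x p w → A.SafeInf x q w)

/-- Centralised: siblings (same parent) whose safe languages are included,
lie in the same SCC of their layer. -/
def Centralised (A : Layered Q α d) : Prop :=
  ∀ p q : Q, 2 ≤ A.layer p → A.layer q = A.layer p →
    A.muHat (A.layer p - 1) p = A.muHat (A.layer p - 1) q →
    A.SafeLE (A.layer p) p q →
    (∃ u : List α, A.runList p u = some q) ∧ (∃ v : List α, A.runList q v = some p)

/-- `L(p) = L(q)`: all leaves above (the layer-1 ancestor of) `p` and all leaves above `q`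
recognise the same language in `⟦A⟧`. -/
def LangEq1 (A : Layered Q α d) (p q : Q) : Prop :=
  ∀ l l' : Q, A.IsLeaf l → A.IsLeaf l' → A.muHat 1 l = A.muHat 1 p →
    A.muHat 1 l' = A.muHat 1 q → ∀ w : ℕ → α, (A.SemAccept l w ↔ A.SemAccept l' w)

/-- The equivalence `p ≈_x q`: language equivalence together with equality of all
`y`-safe languages for `2 ≤ y ≤ x`. -/
def ApproxEq (A : Layered Q α d) (x : ℕ) (p q : Q) : Prop :=
  A.LangEq1 p q ∧ ∀ y : ℕ, 2 ≤ y → y ≤ x →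
    ((∀ u : List α, A.SafeFin y p u ↔ A.SafeFin y q u) ∧
     (∀ w : ℕ → α, A.SafeInf y p w ↔ A.SafeInf y q w))

/-- Safe minimality: `≈_x`-equivalent states of the same layer are equal. -/
def SafeMinimal (A : Layered Q α d) : Prop :=
  ∀ p q : Q, A.layer p = A.layer q → A.ApproxEq (A.layer p) p q → p = q

/-- `z` is a central sequence for the state `p` (of layer `x = layer p`). -/
def IsCentralSeq (A : Layered Q α d) (p : Q) (z : List α) : Prop :=
  z ≠ [] ∧ A.runList p z = some p ∧
  (∀ q : Q, A.layer q = A.layer p →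
    A.muHat (A.layer p - 1) q = A.muHat (A.layer p - 1) p →
    (A.runList q z = some p ∨ A.runList q z = none)) ∧
  (∀ q' : Q, A.layer q' = A.layer p + 1 →
    A.muHat (A.layer p - 1) q' = A.muHat (A.layer p - 1) p →
    A.runList q' z = none)

end Layered

/-! ### Morphisms of layered automata -/

/-- A morphism of layered automata. -/
structure IsLayMorphism {Q R α : Type} {d d' : ℕ} (A : Layered Q α d) (B : Layered R α d')
    (φ : Q → R) : Prop where
  map_init : φ A.init = B.init
  map_step : ∀ q a q', A.δ q a = some q' → B.δ (φ q) a = some (φ q')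
  map_anc : ∀ p q, A.IsAncestor p q → B.IsAncestor (φ p) (φ q)

/-- A strong morphism of layered automata additionally preserves non-transitions. -/
def IsStrongLayMorphism {Q R α : Type} {d d' : ℕ} (A : Layered Q α d) (B : Layered R α d')
    (φ : Q → R) : Prop :=
  IsLayMorphism A B φ ∧ ∀ q a, A.δ q a = none → B.δ (φ q) a = none

/-- An isomorphism of layered automata: a bijection on states that restricts to
isomorphisms of the layer transition systems, preserves the initial state, and
commutes with the morphisms `μ`. -/
structure IsLayIso {Q R α : Type} {d d' : ℕ} (A : Layered Q α d) (B : Layered R α d')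
    (φ : Q ≃ R) : Prop where
  map_layer : ∀ q, B.layer (φ q) = A.layer q
  map_init : φ A.init = B.init
  map_mu : ∀ q, φ (A.μ q) = B.μ (φ q)
  map_step : ∀ q a, (A.δ q a).map φ = B.δ (φ q) a

/-- `L(⟦A⟧) = L(⟦B⟧)`: the semantics automata (with any choice of initial leaf states
above the respective initial states) accept the same infinite words. -/
def SemLangEq {Q R α : Type} {d d' : ℕ} (A : Layered Q α d) (B : Layered R α d') : Prop :=
  ∀ (p : Q) (q : R), A.IsLeaf p → A.muHat 1 p = A.init → B.IsLeaf q → B.muHat 1 q = B.init →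
    ∀ w : ℕ → α, (A.SemAccept p w ↔ B.SemAccept q w)

/-! ### Deterministic parity automata -/

/-- A deterministic parity automaton over `α` with priorities in `[1,d]`. -/
structure DPA (Q α : Type) (d : ℕ) where
  init : Q
  next : Q → α → Q
  prio : Q → α → ℕ
  prio_pos : ∀ q a, 1 ≤ prio q a
  prio_le : ∀ q a, prio q a ≤ d

namespace DPA

variable {Q α : Type} {d : ℕ}

/-- The unique run of a DPA on an infinite word. -/
def run (B : DPA Q α d) (w : ℕ → α) : ℕ → Q
  | 0 => B.init
  | n + 1 => B.next (run B w n) (w n)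

/-- Acceptance by a DPA: the priorities along the unique run satisfy parity. -/
def Accepts (B : DPA Q α d) (w : ℕ → α) : Prop :=
  ParityAccept (fun i => B.prio (B.run w i) (w i))

end DPA

/-- `L` is ω-regular: recognised by some deterministic parity automaton. -/
def IsOmegaRegular {α : Type} (L : Set (ℕ → α)) : Prop :=
  ∃ (n d : ℕ) (B : DPA (Fin n) α d), ∀ w : ℕ → α, w ∈ L ↔ B.Accepts w

/-! ### Nondeterministic coBüchi automata -/

/-- A (complete) nondeterministic coBüchi automaton: transitions carry priorities in `{1,2}`. -/
structure NCA (Q α : Type) where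
  init : Q
  trans : Q → α → ℕ → Q → Prop
  prio_mem : ∀ q a x q', trans q a x q' → x = 1 ∨ x = 2
  complete : ∀ q a, ∃ x q', trans q a x q'

namespace NCA

variable {Q α : Type}

/-- Nondeterministic acceptance from the state `q`. -/
def AcceptFrom (B : NCA Q α) (q : Q) (w : ℕ → α) : Prop :=
  ∃ (ρ : ℕ → Q) (pri : ℕ → ℕ), ρ 0 = q ∧
    (∀ i : ℕ, B.trans (ρ i) (w i) (pri i) (ρ (i + 1))) ∧ ParityAccept pri

/-- Semantic determinism: every `a`-successor of `p` recognises `a⁻¹ L(p)`. -/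
def SemDet (B : NCA Q α) : Prop :=
  ∀ p a x q, B.trans p a x q →
    ∀ w : ℕ → α, (B.AcceptFrom q w ↔ B.AcceptFrom p (prependW [a] w))

/-- Safe determinism: all `a`-transitions from a state carry the same priority, and
there is at most one `a`-transition of priority `2` from each state. -/
def SafeDet (B : NCA Q α) : Prop :=
  (∀ q a x q' x' q'', B.trans q a x q' → B.trans q a x' q'' → x = x') ∧
  (∀ q a q' q'', B.trans q a 2 q' → B.trans q a 2 q'' → q' = q'')

/-- 1-saturation: priority-1 transitions go to all language-equivalent states. -/
def OneSaturated (B : NCA Q α) : Prop :=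
  ∀ q a p p', B.trans q a 1 p →
    (∀ w : ℕ → α, (B.AcceptFrom p' w ↔ B.AcceptFrom p w)) → B.trans q a 1 p'

end NCA

/-! ### Simple-by-priorities alternating parity automata (abstract) -/

/-- A simple-by-priorities alternating parity automaton: a complete transition system
over `α × [1,d]` in which all `a`-transitions from a state carry the same priority. -/
structure SPA (Q α : Type) (d : ℕ) where
  init : Q
  step : Q → α → Q → Prop
  prio : Q → α → ℕ
  prio_pos : ∀ q a, 1 ≤ prio q a
  prio_le : ∀ q a, prio q a ≤ d
  complete : ∀ q a, ∃ q', step q a q'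

/-! ### The congruence on tuples of finite words -/

/-- The data of the congruence at one level (tuples of a fixed length,
represented as reversed lists of components: the head is the last component). -/
structure CongrLevel (α : Type) where
  bot : List (List α) → Prop
  eq : List (List α) → List (List α) → Prop
  ptd : List (List α) → Prop

/-- Concatenate a finite word to the last component of a tuple
(tuples are represented as reversed lists: the head is the last component). -/
def tcat {α : Type} (t : List (List α)) (v : List α) : List (List α) :=
  match t with
  | h :: rest => (h ++ v) :: rest
  | [] => []

/-- Merge the last two components of a tuple. -/
def tmerge {α : Type} (t : List (List α)) : List (List α) :=
  match t with
  | u' :: h :: rest => (h ++ u') :: rest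
  | t' => t'

/-- The congruence data at level `n` (handling tuples of length `n+1`), defined by
recursion on the level, following the inductive definition of `≈ ⊥`, `≈` and `pointed`. -/
def congrData {α : Type} [Inhabited α] (L : Set (ℕ → α)) : ℕ → CongrLevel α
  | 0 =>
    { bot := fun _ => False
      eq := fun t s =>
        match t, s with
        | [u], [v] => ∀ w : ℕ → α, (prependW u w ∈ L ↔ prependW v w ∈ L)
        | _, _ => False
      ptd := fun _ => True }
  | n + 1 =>
    let C := congrData L n
    let bot : List (List α) → Prop := fun t =>
      match t with
      | u' :: ubar =>
        C.bot (tmerge (u' :: ubar)) ∨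
        ∀ w : List α, w ≠ [] → C.eq (tcat (tmerge (u' :: ubar)) w) ubar →
          ((prependW ubar.reverse.flatten (perWord (u' ++ w)) ∈ L) ↔ Even (n + 1))
      | [] => True
    let eq : List (List α) → List (List α) → Prop := fun t s =>
      C.eq (tmerge t) (tmerge s) ∧ ∀ v : List α, (bot (tcat t v) ↔ bot (tcat s v))
    let ptd : List (List α) → Prop := fun t =>
      match t with
      | u' :: ubar =>
        ¬ bot (u' :: ubar) ∧ C.ptd ubar ∧
        ∀ (vbar : List (List α)) (v' : List α), vbar.length = n + 1 → C.ptd vbar →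
          C.eq (tcat vbar v') ubar → ¬ bot ((v' ++ u') :: vbar) →
          eq ((v' ++ u') :: vbar) (u' :: ubar)
      | [] => False
    { bot := bot, eq := eq, ptd := ptd }

/-- `t ≈ ⊥` (for a nonempty tuple `t`, in reversed representation). -/
def TupBot {α : Type} [Inhabited α] (L : Set (ℕ → α)) (t : List (List α)) : Prop :=
  (congrData L (t.length - 1)).bot t

/-- `t ≈ s` (for nonempty tuples of the same length, in reversed representation). -/
def TupEq {α : Type} [Inhabited α] (L : Set (ℕ → α)) (t s : List (List α)) : Prop :=
  t.length = s.length ∧ (congrData L (t.length - 1)).eq t s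

/-- `t` is pointed. -/
def TupPointed {α : Type} [Inhabited α] (L : Set (ℕ → α)) (t : List (List α)) : Prop :=
  (congrData L (t.length - 1)).ptd t

/-- `cls` exhibits `A` as (a copy of) the congruence automaton `A_≈` of `L`: its states
are the `≈`-classes of pointed tuples (the layer being the tuple length), transitions
are given by concatenation in the last component, the initial state is the class of
`(ε)`, and the morphisms are given by merging the last two components. -/
structure IsCongrAut {α : Type} [Inhabited α] (L : Set (ℕ → α)) {Q : Type} {d : ℕ}
    (A : Layered Q α d) (cls : (t : List (List α)) → TupPointed L t → Q) : Prop where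
  surj : ∀ q : Q, ∃ (t : List (List α)) (ht : TupPointed L t), cls t ht = q
  cls_eq : ∀ t ht s hs, cls t ht = cls s hs ↔ TupEq L t s
  layer_eq : ∀ t ht, A.layer (cls t ht) = t.length
  init_eq : ∀ h : TupPointed L [([] : List α)], cls [([] : List α)] h = A.init
  step_some : ∀ t ht (a : α) (h' : TupPointed L (tcat t [a])),
    A.δ (cls t ht) a = some (cls (tcat t [a]) h')
  step_none : ∀ t ht (a : α), TupBot L (tcat t [a]) → A.δ (cls t ht) a = none
  mu_eq : ∀ (u' : List α) (ubar : List (List α)) (h : TupPointed L (u' :: ubar))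
    (h' : TupPointed L (tmerge (u' :: ubar))), ubar ≠ [] →
    A.μ (cls (u' :: ubar) h) = cls (tmerge (u' :: ubar)) h'

end

/-!
A *trap* for `w` at time `n` is a state `t` above the layer-1 state reached after `n` letters
such that the rest of `w` is safe from `t` in its layer, but not safe one layer higher from any
child of a state reached from `t`. A move of `⟦A⟧` at a step of priority `x` to a state above
layer `x` from which the rest of `w` is safe in layer `x + 1` is an *upgrade*; it raises all
later priorities, so a run makes only finitely many upgrades. If from some point on every
upgrade available at a step of the minimal recurring priority `x` is taken, the layer-`x`
ancestors of the run are a trap of layer `x`.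

By consistency all traps for `w` have layers of the same parity. The resolver that always
upgrades thus wins `G(⟦A⟧, w)` for Eve if the traps are even and for Adam if they are odd, so
`w ∈ L(⟦A⟧)` iff they are even. The random walk takes an available upgrade with probability at
least `1 / |Q|`; since upgrades are finitely many, almost surely upgrades eventually stop being
available, so almost every random run ends in a trap whose layer is its minimal recurring
priority, and it is accepting iff `w ∈ L(⟦A⟧)`.
-/

open MeasureTheory Filter
open scoped ENNReal

noncomputable section

section Words

variable {β : Type}

theorem wordDrop_zero (w : ℕ → β) : wordDrop w 0 = w := by
  funext i; simp [wordDrop]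

theorem wordDrop_wordDrop (w : ℕ → β) (a b : ℕ) :
    wordDrop (wordDrop w a) b = wordDrop w (a + b) := by
  funext i; simp [wordDrop, Nat.add_assoc]

theorem wordPrefix_succ (w : ℕ → β) (n : ℕ) : wordPrefix w (n + 1) = wordPrefix w n ++ [w n] := by
  rw [wordPrefix, wordPrefix, List.ofFn_succ', List.concat_eq_append]
  simp

theorem wordPrefix_add (w : ℕ → β) (a b : ℕ) :
    wordPrefix w (a + b) = wordPrefix w a ++ wordPrefix (wordDrop w a) b := by
  induction b with
  | zero => simp [wordPrefix]
  | succ b ih => rw [← Nat.add_assoc, wordPrefix_succ, ih, wordPrefix_succ, List.append_assoc]; rfl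

end Words

section MinInfOften

theorem minInfOften_eq_sInf (f : ℕ → ℕ) :
    minInfOften f = sInf {x | ∃ᶠ n in atTop, f n = x} := by
  simp only [minInfOften, frequently_atTop]

theorem minInfOften_le {f : ℕ → ℕ} {x : ℕ} (hx : ∃ᶠ n in atTop, f n = x) : minInfOften f ≤ x := by
  rw [minInfOften_eq_sInf]; exact Nat.sInf_le hx

theorem frequently_eq_minInfOften {f : ℕ → ℕ} {b : ℕ} (hb : ∀ n, f n ≤ b) :
    ∃ᶠ n in atTop, f n = minInfOften f := by
  have hne : {x | ∃ᶠ n in atTop, f n = x}.Nonempty := by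
    by_contra h
    have : ∀ᶠ n in atTop, ∀ x ∈ Finset.range (b + 1), f n ≠ x :=
      (Finset.range (b + 1)).eventually_all.2 fun x _ => not_frequently.1 fun hx => h ⟨x, hx⟩
    obtain ⟨n, hn⟩ := this.exists
    exact hn (f n) (Finset.mem_range.2 (Nat.lt_succ_of_le (hb n))) rfl
  rw [minInfOften_eq_sInf]
  exact Nat.sInf_mem hne

theorem eventually_minInfOften_le (f : ℕ → ℕ) : ∀ᶠ n in atTop, minInfOften f ≤ f n := by
  have : ∀ᶠ n in atTop, ∀ x ∈ Finset.range (minInfOften f), f n ≠ x :=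
    (Finset.range _).eventually_all.2 fun x hx => not_frequently.1 fun hfx =>
      (Finset.mem_range.1 hx).not_ge (minInfOften_le hfx)
  exact this.mono fun n hn => not_lt.1 fun h => hn (f n) (Finset.mem_range.2 h) rfl

end MinInfOften

theorem sum_filter_not_le_one_sub {Q : Type*} [Fintype Q] {f : Q → ℝ≥0∞} (hf : ∑ q, f q ≤ 1)
    {p : Q → Prop} {q' : Q} (hq' : p q') {ε : ℝ≥0∞} (hε : ε ≤ f q') :
    ∑ q with ¬ p q, f q ≤ 1 - ε := by
  have hq'p : f q' ≤ ∑ q with p q, f q :=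
    Finset.single_le_sum (fun _ _ => zero_le) (by simpa using hq')
  have hsplit : ∑ q with ¬ p q, f q + ∑ q with p q, f q ≤ 1 := by
    rwa [add_comm, Finset.sum_filter_add_sum_filter_not]
  have hε1 : ε ≤ 1 := (hε.trans hq'p).trans (le_add_self.trans hsplit)
  exact ENNReal.le_sub_of_add_le_right (ne_top_of_le_ne_top ENNReal.one_ne_top hε1)
    ((add_le_add le_rfl (hε.trans hq'p)).trans hsplit)

section Tuples

variable {Q : Type*}

def cylinder {n : ℕ} (s : Fin (n + 1) → Q) : Set (ℕ → Q) := {ρ | ∀ i : Fin (n + 1), ρ i = s i}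

theorem mem_cylinder_restrict (ρ : ℕ → Q) (n : ℕ) : ρ ∈ cylinder (fun i : Fin (n + 1) => ρ i) :=
  fun _ => rfl

theorem snoc_restrict (ρ : ℕ → Q) (n : ℕ) :
    (Fin.snoc (fun i : Fin (n + 1) => ρ i) (ρ (n + 1)) : Fin (n + 2) → Q) =
      fun i : Fin (n + 2) => ρ i :=
  Fin.snoc_init_self (fun i : Fin (n + 2) => ρ i)

theorem sum_pi_fin_snoc [Fintype Q] {M : Type*} [AddCommMonoid M] {n : ℕ}
    (f : (Fin (n + 2) → Q) → M) : ∑ s, f s = ∑ s : Fin (n + 1) → Q, ∑ q, f (Fin.snoc s q) := by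
  rw [← Fintype.sum_equiv (Fin.snocEquiv fun _ => Q) (fun x => f (Fin.snoc x.2 x.1)) f
    (fun _ => rfl), Fintype.sum_prod_type, Finset.sum_comm]

variable (Opp : ℕ → Q → Prop) (Good : ℕ → Q → Q → Prop)

def oppCount {n : ℕ} (s : Fin (n + 1) → Q) : ℕ :=
  ∑ i : Fin n, if Opp i (s i.castSucc) then 1 else 0

def MissesAll {n : ℕ} (s : Fin (n + 1) → Q) : Prop :=
  ∀ i : Fin n, Opp i (s i.castSucc) → ¬ Good i (s i.castSucc) (s i.succ)

theorem oppCount_snoc {n : ℕ} (s : Fin (n + 1) → Q) (q : Q) :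
    oppCount Opp (Fin.snoc s q : Fin (n + 2) → Q) =
      oppCount Opp s + if Opp n (s (Fin.last n)) then 1 else 0 := by
  simp only [oppCount, Fin.sum_univ_castSucc (n := n), Fin.snoc_castSucc, Fin.val_castSucc,
    Fin.val_last]

theorem missesAll_snoc {n : ℕ} (s : Fin (n + 1) → Q) (q : Q) :
    MissesAll Opp Good (Fin.snoc s q : Fin (n + 2) → Q) ↔
      MissesAll Opp Good s ∧ (Opp n (s (Fin.last n)) → ¬ Good n (s (Fin.last n)) q) := by
  simp only [MissesAll, Fin.forall_fin_succ' (n := n), Fin.snoc_castSucc, Fin.val_castSucc,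
    Fin.succ_castSucc, Fin.succ_last, Fin.snoc_last, Fin.val_last]

theorem oppCount_restrict (ρ : ℕ → Q) (n : ℕ) :
    oppCount Opp (fun i : Fin (n + 1) => ρ i) = Nat.count (fun i => Opp i (ρ i)) n := by
  rw [Nat.count_eq_card_filter_range, Finset.card_filter, ← Fin.sum_univ_eq_sum_range]
  rfl

theorem missesAll_restrict {ρ : ℕ → Q}
    (h : ∀ n, Opp n (ρ n) → ¬ Good n (ρ n) (ρ (n + 1))) (n : ℕ) :
    MissesAll Opp Good (fun i : Fin (n + 1) => ρ i) :=
  fun i => h i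

end Tuples

section MarkovMeasure

variable {Q : Type*} [MeasurableSpace Q]

def IsMarkovMeasure (P : ℕ → Q → Q → ℝ≥0∞) (q0 : Q) (m : Measure (ℕ → Q)) : Prop :=
  ∀ (n : ℕ) (s : Fin (n + 1) → Q),
    m (cylinder s) = (if s 0 = q0 then 1 else 0) * ∏ i : Fin n, P i (s i.castSucc) (s i.succ)

variable {P : ℕ → Q → Q → ℝ≥0∞} {q0 : Q} {m : Measure (ℕ → Q)}

namespace IsMarkovMeasure

theorem measure_cylinder_snoc (hm : IsMarkovMeasure P q0 m) {n : ℕ} (s : Fin (n + 1) → Q)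
    (q : Q) :
    m (cylinder (Fin.snoc s q : Fin (n + 2) → Q)) = m (cylinder s) * P n (s (Fin.last n)) q := by
  rw [hm, hm, Fin.prod_univ_castSucc, mul_assoc, ← Fin.castSucc_zero, Fin.snoc_castSucc]
  simp only [Fin.succ_castSucc, Fin.snoc_castSucc, Fin.succ_last, Fin.snoc_last, Fin.val_last,
    Fin.val_castSucc]

theorem sum_measure_cylinder_fin_one [Fintype Q] (hm : IsMarkovMeasure P q0 m) :
    ∑ s : Fin 1 → Q, m (cylinder s) = 1 := by
  rw [← Fintype.sum_equiv (Equiv.funUnique (Fin 1) Q).symm (fun q => m (cylinder fun _ => q))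
    _ (fun _ => rfl)]
  simp_rw [hm 0]
  simp

theorem ae_start_eq_and_weight_ne_zero [Countable Q] (hm : IsMarkovMeasure P q0 m) :
    ∀ᵐ ρ ∂m, ρ 0 = q0 ∧ ∀ n, P n (ρ n) (ρ (n + 1)) ≠ 0 := by
  have hstart : m {ρ | ρ 0 ≠ q0} = 0 := by
    refine measure_mono_null (t := ⋃ (s : Fin 1 → Q) (_ : s 0 ≠ q0), cylinder s)
      (fun ρ hρ => ?_) (measure_iUnion_null fun s => measure_iUnion_null fun hs => ?_)
    · exact Set.mem_iUnion₂.2 ⟨fun i => ρ i, hρ, mem_cylinder_restrict ρ 0⟩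
    · rw [hm, if_neg hs, zero_mul]
  have hstep (n : ℕ) : m {ρ | P n (ρ n) (ρ (n + 1)) = 0} = 0 := by
    refine measure_mono_null (t := ⋃ (s : Fin (n + 1) → Q) (q : Q) (_ : P n (s (Fin.last n)) q = 0),
      cylinder (Fin.snoc s q : Fin (n + 2) → Q)) (fun ρ hρ => ?_)
      (measure_iUnion_null fun s => measure_iUnion_null fun q => measure_iUnion_null fun hq => ?_)
    · refine Set.mem_iUnion.2 ⟨fun i => ρ i, Set.mem_iUnion₂.2 ⟨ρ (n + 1), hρ, ?_⟩⟩
      rw [snoc_restrict]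
      exact mem_cylinder_restrict ρ (n + 1)
    · rw [hm.measure_cylinder_snoc, hq, mul_zero]
  rw [ae_iff]
  refine measure_mono_null (fun ρ hρ => ?_) (measure_union_null hstart (measure_iUnion_null hstep))
  simp only [Set.mem_ofPred_eq, not_and_or, not_forall, not_not] at hρ
  simpa [or_iff_not_imp_left] using hρ

section Opportunities

variable [Fintype Q] (Opp : ℕ → Q → Prop) (Good : ℕ → Q → Q → Prop)

/-- A supermartingale bound: each missed opportunity multiplies the weight by `y`, but is
missed with probability at most `y⁻¹`. -/
theorem sum_missesAll_le_one (hm : IsMarkovMeasure P q0 m) (hP : ∀ j p, ∑ q, P j p q ≤ 1)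
    {y : ℝ≥0∞} (hy : ∀ j p, Opp j p → y * ∑ q with ¬ Good j p q, P j p q ≤ 1) (n : ℕ) :
    ∑ s : Fin (n + 1) → Q,
      (if MissesAll Opp Good s then m (cylinder s) * y ^ oppCount Opp s else 0) ≤ 1 := by
  induction n with
  | zero =>
    simp only [MissesAll, IsEmpty.forall_iff, if_true, oppCount, Finset.univ_eq_empty,
      Finset.sum_empty, pow_zero, mul_one]
    exact (hm.sum_measure_cylinder_fin_one).le
  | succ n ih =>
    have hstep (p : Q) : ∑ q, (if Opp n p → ¬ Good n p q
        then P n p q * y ^ (if Opp n p then 1 else 0) else 0) ≤ 1 := by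
      by_cases hp : Opp n p
      · simpa [hp, Finset.sum_filter, Finset.mul_sum, mul_comm] using hy n p hp
      · simpa [hp] using hP n p
    rw [sum_pi_fin_snoc]
    refine le_trans (Finset.sum_le_sum fun s _ => ?_) ih
    by_cases hs : MissesAll Opp Good s
    · simp only [missesAll_snoc, hs, true_and, if_true, oppCount_snoc,
        hm.measure_cylinder_snoc, pow_add]
      generalize s (Fin.last n) = p
      calc _ = m (cylinder s) * y ^ oppCount Opp s * ∑ q, (if Opp n p → ¬ Good n p q
            then P n p q * y ^ (if Opp n p then 1 else 0) else 0) := by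
            rw [Finset.mul_sum]
            exact Finset.sum_congr rfl fun q _ => by split_ifs <;> ring
        _ ≤ m (cylinder s) * y ^ oppCount Opp s := mul_le_of_le_one_right' (hstep p)
    · simp [missesAll_snoc, hs]

theorem measure_missesAll_mul_pow_le_one (hm : IsMarkovMeasure P q0 m)
    (hP : ∀ j p, ∑ q, P j p q ≤ 1) {y : ℝ≥0∞}
    (hy : ∀ j p, Opp j p → y * ∑ q with ¬ Good j p q, P j p q ≤ 1) (hy1 : 1 ≤ y) (n k : ℕ) :
    m {ρ | MissesAll Opp Good (fun i : Fin (n + 1) => ρ i) ∧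
      k ≤ oppCount Opp (fun i : Fin (n + 1) => ρ i)} * y ^ k ≤ 1 := by
  set S := Finset.univ.filter fun s : Fin (n + 1) → Q =>
    MissesAll Opp Good s ∧ k ≤ oppCount Opp s
  have hcover : {ρ | MissesAll Opp Good (fun i : Fin (n + 1) => ρ i) ∧
      k ≤ oppCount Opp (fun i : Fin (n + 1) => ρ i)} ⊆ ⋃ s ∈ S, cylinder s := fun ρ hρ =>
    Set.mem_biUnion (by simpa [S] using hρ) (mem_cylinder_restrict ρ n)
  calc _ ≤ (∑ s ∈ S, m (cylinder s)) * y ^ k := by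
        gcongr; exact (measure_mono hcover).trans (measure_biUnion_finset_le _ _)
    _ ≤ ∑ s ∈ S, m (cylinder s) * y ^ oppCount Opp s := by
        rw [Finset.sum_mul]
        gcongr with s hs
        exact (Finset.mem_filter.1 hs).2.2
    _ ≤ ∑ s ∈ Finset.univ.filter (MissesAll Opp Good), m (cylinder s) * y ^ oppCount Opp s :=
        Finset.sum_le_sum_of_subset fun s hs => by
          simp only [S, Finset.mem_filter] at hs ⊢; exact ⟨hs.1, hs.2.1⟩
    _ ≤ 1 := by
        rw [Finset.sum_filter]; exact hm.sum_missesAll_le_one Opp Good hP hy n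

theorem measure_missesAll_frequently_eq_zero (hm : IsMarkovMeasure P q0 m)
    (hP : ∀ j p, ∑ q, P j p q ≤ 1) {ε : ℝ≥0∞} (hε : ε ≠ 0)
    (hOpp : ∀ j p, Opp j p → ∃ q, Good j p q ∧ ε ≤ P j p q) :
    m {ρ | (∀ n, Opp n (ρ n) → ¬ Good n (ρ n) (ρ (n + 1))) ∧ ∃ᶠ n in atTop, Opp n (ρ n)} = 0 := by
  set B := {ρ : ℕ → Q | (∀ n, Opp n (ρ n) → ¬ Good n (ρ n) (ρ (n + 1))) ∧
    ∃ᶠ n in atTop, Opp n (ρ n)}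
  have hy (j : ℕ) (p : Q) (hp : Opp j p) : (1 - ε)⁻¹ * ∑ q with ¬ Good j p q, P j p q ≤ 1 := by
    obtain ⟨q, hq, hεq⟩ := hOpp j p hp
    calc _ ≤ (1 - ε)⁻¹ * (1 - ε) := by gcongr; exact sum_filter_not_le_one_sub (hP j p) hq hεq
      _ ≤ 1 := ENNReal.inv_mul_le_one _
  have hbound (k : ℕ) : m B ≤ (1 - ε) ^ k := by
    let C (N : ℕ) := B ∩ {ρ | k ≤ Nat.count (fun i => Opp i (ρ i)) N}
    have hC : Monotone C := fun N N' h ρ hρ => ⟨hρ.1, hρ.2.trans (Nat.count_monotone _ h)⟩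
    have hB : B ⊆ ⋃ N, C N := fun ρ hρ => Set.mem_iUnion.2 ⟨_, hρ,
      (Nat.count_nth_of_infinite (Nat.frequently_atTop_iff_infinite.1 hρ.2) k).ge⟩
    calc m B ≤ ⨆ N, m (C N) := (measure_mono hB).trans_eq hC.measure_iUnion
      _ ≤ (1 - ε) ^ k := iSup_le fun N => by
        rw [← inv_inv (1 - ε), ← ENNReal.inv_pow, ENNReal.le_inv_iff_mul_le]
        refine le_trans ?_ (hm.measure_missesAll_mul_pow_le_one Opp Good hP hy
          (ENNReal.one_le_inv.2 tsub_le_self) N k)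
        gcongr
        exact fun ρ hρ => ⟨missesAll_restrict Opp Good hρ.1.1 N,
          (oppCount_restrict Opp ρ N).ge.trans' hρ.2⟩
  have hlt : 1 - ε < 1 := ENNReal.sub_lt_self ENNReal.one_ne_top one_ne_zero hε
  exact le_antisymm (ge_of_tendsto' (ENNReal.tendsto_pow_atTop_nhds_zero_of_lt_one hlt) hbound)
    bot_le

/-- A form of Lévy's extension of the Borel–Cantelli lemma. -/
theorem ae_frequently_good (hm : IsMarkovMeasure P q0 m) (hP : ∀ j p, ∑ q, P j p q ≤ 1)
    {ε : ℝ≥0∞} (hε : ε ≠ 0) (hOpp : ∀ j p, Opp j p → ∃ q, Good j p q ∧ ε ≤ P j p q) :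
    ∀ᵐ ρ ∂m, (∃ᶠ n in atTop, Opp n (ρ n)) → ∃ᶠ n in atTop, Good n (ρ n) (ρ (n + 1)) := by
  rw [ae_iff]
  refine measure_mono_null (fun ρ hρ => ?_) (measure_iUnion_null fun n0 =>
    hm.measure_missesAll_frequently_eq_zero (fun n p => n0 ≤ n ∧ Opp n p) Good hP hε
      fun j p hp => hOpp j p hp.2)
  simp only [Set.mem_ofPred_eq, Classical.not_imp, not_frequently, eventually_atTop] at hρ
  obtain ⟨hfreq, n0, hn0⟩ := hρ
  exact Set.mem_iUnion.2 ⟨n0, fun n hn => hn0 n hn.1,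
    (hfreq.and_eventually (eventually_ge_atTop n0)).mono fun n h => ⟨h.2, h.1⟩⟩

end Opportunities

end IsMarkovMeasure

end MarkovMeasure

namespace Layered

variable {Q α : Type} {d : ℕ} (A : Layered Q α d)

section Ancestors

theorem layer_iterate_μ (q : Q) {k : ℕ} (hk : k < A.layer q) :
    A.layer (A.μ^[k] q) = A.layer q - k := by
  induction k with
  | zero => rfl
  | succ k ih =>
    rw [Function.iterate_succ_apply']
    have := A.μ_layer _ (by rw [ih (by omega)]; omega)
    rw [ih (by omega)] at this
    omega

theorem layer_muHat (q : Q) {x : ℕ} (h1 : 1 ≤ x) (h2 : x ≤ A.layer q) :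
    A.layer (A.muHat x q) = x := by
  rw [muHat, A.layer_iterate_μ q (by omega)]
  omega

theorem muHat_of_layer_le {x : ℕ} {q : Q} (h : A.layer q ≤ x) : A.muHat x q = q := by
  rw [muHat, Nat.sub_eq_zero_of_le h, Function.iterate_zero_apply]

theorem muHat_muHat (q : Q) {x y : ℕ} (hy : 1 ≤ y) (hxy : x ≤ y) (hyq : y ≤ A.layer q) :
    A.muHat x (A.muHat y q) = A.muHat x q := by
  rw [muHat, A.layer_muHat q hy hyq, muHat, muHat, ← Function.iterate_add_apply]
  congr 1
  omega

theorem muHat_muHat_self (q : Q) {x : ℕ} (hx : 1 ≤ x) : A.muHat x (A.muHat x q) = A.muHat x q := by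
  rcases le_total x (A.layer q) with h | h
  · exact A.muHat_muHat q hx le_rfl h
  · rw [A.muHat_of_layer_le h, A.muHat_of_layer_le h]

theorem muHat_of_layer_eq_succ {x : ℕ} {p : Q} (h : A.layer p = x + 1) : A.muHat x p = A.μ p := by
  rw [muHat, h, Nat.add_sub_cancel_left, Function.iterate_one]

theorem exists_leaf_above (q : Q) :
    ∃ l, A.IsLeaf l ∧ A.layer q ≤ A.layer l ∧ A.muHat (A.layer q) l = q := by
  by_cases hq : A.IsLeaf q
  · exact ⟨q, hq, le_rfl, A.muHat_of_layer_le le_rfl⟩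
  · obtain ⟨p, hp, rfl⟩ : ∃ p, 1 < A.layer p ∧ A.μ p = q := by simpa [IsLeaf] using hq
    have hlp := A.μ_layer p hp
    obtain ⟨l, hl, hpl, hlp'⟩ := exists_leaf_above p
    refine ⟨l, hl, by omega, ?_⟩
    rw [← A.muHat_muHat l (by omega) (by omega) hpl, hlp', A.muHat_of_layer_eq_succ hlp.symm]
termination_by d - A.layer q
decreasing_by subst_vars; have := A.layer_le p; omega

end Ancestors

section Runs

theorem δ_iterate_μ {q q' : Q} {a : α} (h : A.δ q a = some q') {k : ℕ} (hk : k < A.layer q) :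
    A.δ (A.μ^[k] q) a = some (A.μ^[k] q') := by
  induction k with
  | zero => exact h
  | succ k ih =>
    rw [Function.iterate_succ_apply', Function.iterate_succ_apply']
    exact A.μ_morph _ _ _ (by rw [A.layer_iterate_μ q (by omega)]; omega) (ih (by omega))

theorem δ_muHat {q q' : Q} {a : α} (h : A.δ q a = some q') {x : ℕ} (hx : 1 ≤ x) :
    A.δ (A.muHat x q) a = some (A.muHat x q') := by
  have := A.layer_pos q
  rw [muHat, muHat, A.δ_layer q a q' h]
  exact A.δ_iterate_μ h (by omega)

theorem runList_append (q : Q) (u v : List α) :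
    A.runList q (u ++ v) = (A.runList q u).bind (A.runList · v) := by
  induction u generalizing q with
  | nil => rfl
  | cons a u ih =>
    simp only [List.cons_append, runList]
    cases A.δ q a <;> simp [ih]

theorem runList_singleton (q : Q) (a : α) : A.runList q [a] = A.δ q a := by
  cases h : A.δ q a <;> simp [runList, h]

theorem layer_of_runList {u : List α} {q q' : Q} (h : A.runList q u = some q') :
    A.layer q' = A.layer q := by
  induction u generalizing q with
  | nil => cases h; rfl
  | cons a u ih =>
    simp only [runList] at h
    split at h
    · next r hr => rw [ih h, A.δ_layer q a r hr]
    · cases h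

theorem runList_muHat {u : List α} {q q' : Q} (h : A.runList q u = some q') {x : ℕ} (hx : 1 ≤ x) :
    A.runList (A.muHat x q) u = some (A.muHat x q') := by
  induction u generalizing q with
  | nil => cases h; rfl
  | cons a u ih =>
    simp only [runList] at h ⊢
    split at h
    · next r hr => rw [A.δ_muHat hr hx]; exact ih h
    · cases h

end Runs

section Semantics

theorem one_le_layerOf (q : Q) (a : α) : 1 ≤ A.layerOf q a :=
  Nat.le_findGreatest (A.layer_pos q)
    (A.complete1 _ a (A.layer_muHat q le_rfl (A.layer_pos q)))

theorem layerOf_le_layer (q : Q) (a : α) : A.layerOf q a ≤ A.layer q :=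
  Nat.findGreatest_le _

theorem isSome_δ_muHat_layerOf (q : Q) (a : α) :
    (A.δ (A.muHat (A.layerOf q a) q) a).isSome :=
  Nat.findGreatest_spec (P := fun x => (A.δ (A.muHat x q) a).isSome = true) (A.layer_pos q)
    (A.complete1 _ a (A.layer_muHat q le_rfl (A.layer_pos q)))

theorem le_layerOf {q : Q} {a : α} {x : ℕ} (hx : x ≤ A.layer q)
    (h : (A.δ (A.muHat x q) a).isSome) : x ≤ A.layerOf q a :=
  Nat.le_findGreatest hx h

theorem exists_semStep (q : Q) (a : α) : ∃ q', A.semStep q a q' := by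
  obtain ⟨r, hr⟩ := Option.isSome_iff_exists.1 (A.isSome_δ_muHat_layerOf q a)
  have hlr : A.layer r = A.layerOf q a := by
    rw [A.δ_layer _ a r hr, A.layer_muHat q (A.one_le_layerOf q a) (A.layerOf_le_layer q a)]
  obtain ⟨l, hl, -, hlr'⟩ := A.exists_leaf_above r
  exact ⟨l, hl, by rw [hr, ← hlr, hlr']⟩

theorem layerOf_le_layer_of_semStep {q q' : Q} {a : α} (h : A.semStep q a q') :
    A.layerOf q a ≤ A.layer q' := by
  by_contra hc
  have := A.δ_layer _ a _ h.2
  rw [A.muHat_of_layer_le (le_of_not_ge hc),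
    A.layer_muHat q (A.one_le_layerOf q a) (A.layerOf_le_layer q a)] at this
  omega

theorem δ_muHat_of_semStep {q q' : Q} {a : α} (h : A.semStep q a q') {x : ℕ} (hx : 1 ≤ x)
    (hxq : x ≤ A.layerOf q a) : A.δ (A.muHat x q) a = some (A.muHat x q') := by
  have := A.δ_muHat h.2 hx
  rwa [A.muHat_muHat q (A.one_le_layerOf q a) hxq (A.layerOf_le_layer q a),
    A.muHat_muHat q' (A.one_le_layerOf q a) hxq (A.layerOf_le_layer_of_semStep h)] at this

end Semantics

section Safety

variable {x : ℕ} {s : Q} {v : ℕ → α}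

theorem safeInf_muHat_iff (q : Q) (hx : 1 ≤ x) : A.SafeInf x (A.muHat x q) v ↔ A.SafeInf x q v := by
  simp only [SafeInf, SafeFin, A.muHat_muHat_self q hx]

variable {A}

theorem SafeInf.exists_runList (hs : A.SafeInf x s v) (hsx : A.layer s ≤ x) (k : ℕ) :
    ∃ s', A.runList s (wordPrefix v k) = some s' := by
  have := hs k
  rw [SafeFin, A.muHat_of_layer_le hsx] at this
  exact Option.isSome_iff_exists.1 this

theorem SafeInf.drop_of_runList (hs : A.SafeInf x s v) (hsx : A.layer s ≤ x) {k : ℕ} {s' : Q}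
    (hrun : A.runList s (wordPrefix v k) = some s') : A.SafeInf x s' (wordDrop v k) := by
  intro n
  have := hs (k + n)
  rw [SafeFin, A.muHat_of_layer_le hsx, wordPrefix_add, runList_append, hrun] at this
  rwa [SafeFin, A.muHat_of_layer_le ((A.layer_of_runList hrun).trans_le hsx)]

theorem SafeInf.exists_δ (hs : A.SafeInf x s v) (hsx : A.layer s ≤ x) :
    ∃ s', A.δ s (v 0) = some s' ∧ A.SafeInf x s' (wordDrop v 1) := by
  obtain ⟨s', hs'⟩ := hs.exists_runList hsx 1
  exact ⟨s', by simpa [wordPrefix, runList_singleton] using hs', hs.drop_of_runList hsx hs'⟩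

end Safety

theorem semPrio_le (q : Q) (a : α) : A.semPrio q a ≤ d :=
  (A.layerOf_le_layer q a).trans (A.layer_le q)

def Upgrade (w : ℕ → α) (n : ℕ) (q q' : Q) : Prop :=
  A.semPrio q (w n) + 1 ≤ A.layer q' ∧
    A.SafeInf (A.semPrio q (w n) + 1) q' (wordDrop w (n + 1))

def Opportunity (w : ℕ → α) (n : ℕ) (q : Q) : Prop :=
  ∃ q', A.semStep q (w n) q' ∧ A.Upgrade w n q q'

section Run

variable {A} {w : ℕ → α} {q0 : Q} {ρ : ℕ → Q}

theorem IsSemRun.runList_muHat (hρ : A.IsSemRun w q0 ρ) {x : ℕ} (hx : 1 ≤ x) {N : ℕ} :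
    ∀ k, (∀ i, N ≤ i → i < N + k → x ≤ A.runPrios w ρ i) →
      A.runList (A.muHat x (ρ N)) (wordPrefix (wordDrop w N) k) = some (A.muHat x (ρ (N + k)))
  | 0, _ => rfl
  | k + 1, h => by
    rw [wordPrefix_succ, runList_append, hρ.runList_muHat hx k fun i hi hi' => h i hi (by omega),
      Option.bind_some, runList_singleton]
    exact A.δ_muHat_of_semStep (hρ.2 (N + k)) hx (h _ (by omega) (by omega))

theorem IsSemRun.runList_muHat_one (hρ : A.IsSemRun w q0 ρ) (n : ℕ) :
    A.runList (A.muHat 1 q0) (wordPrefix w n) = some (A.muHat 1 (ρ n)) := by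
  have := hρ.runList_muHat le_rfl (N := 0) n fun i _ _ => A.one_le_layerOf _ _
  rwa [wordDrop_zero, hρ.1, zero_add] at this

theorem IsSemRun.safeInf (hρ : A.IsSemRun w q0 ρ) {x N : ℕ} (hx : 1 ≤ x)
    (h : ∀ i, N ≤ i → x ≤ A.runPrios w ρ i) : A.SafeInf x (ρ N) (wordDrop w N) := fun k => by
  rw [SafeFin, hρ.runList_muHat hx k fun i hi _ => h i hi]
  rfl

theorem IsSemRun.le_runPrios_of_safeInf (hρ : A.IsSemRun w q0 ρ) {x N : ℕ} (hx : 1 ≤ x)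
    (hN : x ≤ A.layer (ρ N)) (hsafe : A.SafeInf x (ρ N) (wordDrop w N)) :
    ∀ n, N ≤ n → x ≤ A.runPrios w ρ n := by
  have step (i : ℕ) (hi : x ≤ A.layer (ρ i)) (hs : A.SafeInf x (ρ i) (wordDrop w i)) :
      x ≤ A.runPrios w ρ i ∧ x ≤ A.layer (ρ (i + 1)) ∧
        A.SafeInf x (ρ (i + 1)) (wordDrop w (i + 1)) := by
    rw [← safeInf_muHat_iff A _ hx] at hs
    obtain ⟨s', hs', hsafe'⟩ := hs.exists_δ (A.layer_muHat _ hx hi).le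
    simp only [wordDrop, Nat.add_zero] at hs'
    have hprio : x ≤ A.runPrios w ρ i := A.le_layerOf hi (by rw [hs']; rfl)
    have hδ := A.δ_muHat_of_semStep (hρ.2 i) hx hprio
    rw [hs', Option.some_inj] at hδ
    refine ⟨hprio, hprio.trans (A.layerOf_le_layer_of_semStep (hρ.2 i)), ?_⟩
    rwa [← safeInf_muHat_iff A _ hx, ← hδ, ← wordDrop_wordDrop]
  intro n hn
  obtain ⟨k, rfl⟩ := Nat.exists_eq_add_of_le hn
  suffices x ≤ A.layer (ρ (N + k)) ∧ A.SafeInf x (ρ (N + k)) (wordDrop w (N + k)) from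
    (step _ this.1 this.2).1
  induction k with
  | zero => exact ⟨hN, hsafe⟩
  | succ k ih => exact (step _ (ih (by omega)).1 (ih (by omega)).2).2

theorem IsSemRun.runPrios_lt_of_upgrade (hρ : A.IsSemRun w q0 ρ) {n : ℕ}
    (h : A.Upgrade w n (ρ n) (ρ (n + 1))) (m : ℕ) (hm : n < m) :
    A.runPrios w ρ n < A.runPrios w ρ m :=
  hρ.le_runPrios_of_safeInf (by omega) h.1 h.2 m hm

/-- Every upgrade raises the priorities seen afterwards, which are bounded by `d`. -/
theorem IsSemRun.eventually_not_upgrade (hρ : A.IsSemRun w q0 ρ) :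
    ∀ᶠ n in atTop, ¬ A.Upgrade w n (ρ n) (ρ (n + 1)) := by
  by_contra h
  rw [not_eventually] at h
  simp only [not_not] at h
  have key (k : ℕ) : ∃ N, ∀ m, N ≤ m → k ≤ A.runPrios w ρ m := by
    induction k with
    | zero => exact ⟨0, fun _ _ => Nat.zero_le _⟩
    | succ k ih =>
      obtain ⟨N, hN⟩ := ih
      obtain ⟨n, hn, hup⟩ := frequently_atTop.1 h N
      exact ⟨n + 1, fun m hm => (hN n hn).trans_lt (hρ.runPrios_lt_of_upgrade hup m hm)⟩
  obtain ⟨N, hN⟩ := key (d + 1)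
  exact absurd (hN N le_rfl) (not_le.2 (Nat.lt_succ_of_le (A.semPrio_le _ _)))

end Run

section Traps

/-- The part of strong acceptance and strong rejection that does not depend on the parity
of the layer of `t`. -/
def StronglySafe (t : Q) (v : ℕ → α) : Prop :=
  A.SafeInf (A.layer t) t v ∧
    ∀ (n : ℕ) (p : Q), A.layer p = A.layer t + 1 → A.runList t (wordPrefix v n) = some (A.μ p) →
      ¬ A.SafeInf (A.layer p) p (wordDrop v n)

def IsTrap (w : ℕ → α) (q0 : Q) (n : ℕ) (t : Q) : Prop :=
  A.runList (A.muHat 1 q0) (wordPrefix w n) = some (A.muHat 1 t) ∧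
    A.StronglySafe t (wordDrop w n)

variable {A} {w : ℕ → α} {q0 : Q}

theorem StronglySafe.drop_of_runList {t t' : Q} {v : ℕ → α} (ht : A.StronglySafe t v) {k : ℕ}
    (hrun : A.runList t (wordPrefix v k) = some t') : A.StronglySafe t' (wordDrop v k) := by
  have hlt := A.layer_of_runList hrun
  refine ⟨hlt ▸ ht.1.drop_of_runList le_rfl hrun, fun n p hp hrun' => ?_⟩
  rw [wordDrop_wordDrop]
  refine ht.2 (k + n) p (hlt ▸ hp) ?_
  rw [wordPrefix_add, runList_append, hrun]
  exact hrun'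

theorem IsTrap.exists_add {n : ℕ} {t : Q} (ht : A.IsTrap w q0 n t) (k : ℕ) :
    ∃ t', A.layer t' = A.layer t ∧ A.IsTrap w q0 (n + k) t' := by
  obtain ⟨t', ht'⟩ := ht.2.1.exists_runList le_rfl k
  refine ⟨t', A.layer_of_runList ht', ?_, ?_⟩
  · rw [wordPrefix_add, runList_append, ht.1, Option.bind_some]
    exact A.runList_muHat ht' le_rfl
  · rw [← wordDrop_wordDrop]
    exact ht.2.drop_of_runList ht'

theorem IsTrap.even_layer_iff (hcons : A.Consistent) {n₁ n₂ : ℕ} {t₁ t₂ : Q}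
    (h₁ : A.IsTrap w q0 n₁ t₁) (h₂ : A.IsTrap w q0 n₂ t₂) :
    Even (A.layer t₁) ↔ Even (A.layer t₂) := by
  obtain ⟨t₁', hl₁, h₁'⟩ := h₁.exists_add n₂
  obtain ⟨t₂', hl₂, h₂'⟩ := h₂.exists_add n₁
  rw [add_comm] at h₂'
  have hμ : A.muHat 1 t₁' = A.muHat 1 t₂' := Option.some_inj.1 (h₁'.1.symm.trans h₂'.1)
  have key {a b : Q} (hab : A.muHat 1 a = A.muHat 1 b)
      (ha : A.StronglySafe a (wordDrop w (n₁ + n₂))) (hb : A.StronglySafe b (wordDrop w (n₁ + n₂)))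
      (he : Even (A.layer a)) : Even (A.layer b) :=
    by_contra fun ho => hcons ⟨a, b, _, hab, ⟨he, ha⟩, ⟨Nat.not_even_iff_odd.1 ho, hb⟩⟩
  rw [← hl₁, ← hl₂]
  exact ⟨key hμ h₁'.2 h₂'.2, key hμ.symm h₂'.2 h₁'.2⟩

end Traps

section TrapOfRun

variable {A} {w : ℕ → α} {q0 : Q} {ρ : ℕ → Q}

/-- A leaf above the successor of a safe child of `q` is an upgrading move from `q`. -/
theorem opportunity_of_safeInf {n : ℕ} {q p : Q} (hp : A.layer p = A.semPrio q (w n) + 1)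
    (hμ : A.μ p = A.muHat (A.semPrio q (w n)) q) (hsafe : A.SafeInf (A.layer p) p (wordDrop w n)) :
    A.Opportunity w n q := by
  set x := A.semPrio q (w n)
  have hx : 1 ≤ x := A.one_le_layerOf _ _
  obtain ⟨p', hp', hsafe'⟩ := hsafe.exists_δ le_rfl
  have hlp' : A.layer p' = x + 1 := (A.δ_layer _ _ _ hp').trans hp
  obtain ⟨l, hl, hll, hlp⟩ := A.exists_leaf_above p'
  rw [hlp'] at hll hlp
  have hμl : A.muHat x l = A.μ p' := by
    rw [← A.muHat_muHat l (by omega) (by omega) hll, hlp, A.muHat_of_layer_eq_succ hlp']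
  refine ⟨l, ⟨hl, ?_⟩, hll, ?_⟩
  · change A.δ (A.muHat x q) (w n) = some (A.muHat x l)
    rw [← hμ, hμl]
    exact A.μ_morph _ _ _ (by omega) hp'
  · change A.SafeInf (x + 1) l (wordDrop w (n + 1))
    rw [← safeInf_muHat_iff A l (by omega), hlp, ← wordDrop_wordDrop, ← hp]
    exact hsafe'

theorem IsSemRun.not_safeInf_of_not_opportunity (hρ : A.IsSemRun w q0 ρ) {x N : ℕ}
    (hge : ∀ n, N ≤ n → x ≤ A.runPrios w ρ n) (hfreq : ∃ᶠ n in atTop, A.runPrios w ρ n = x)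
    (hno : ∀ n, N ≤ n → A.runPrios w ρ n = x → ¬ A.Opportunity w n (ρ n)) {p : Q}
    (hp : A.layer p = x + 1) (hμ : A.μ p = A.muHat x (ρ N)) :
    ¬ A.SafeInf (x + 1) p (wordDrop w N) := by
  intro hsafe
  obtain ⟨n, hn, hnx⟩ := frequently_atTop.1 hfreq N
  obtain ⟨k, rfl⟩ := Nat.exists_eq_add_of_le hn
  have hx : 1 ≤ x := hnx ▸ A.one_le_layerOf _ _
  obtain ⟨p', hp'⟩ := hsafe.exists_runList hp.le k
  have hlp' : A.layer p' = x + 1 := (A.layer_of_runList hp').trans hp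
  have hμ' : A.μ p' = A.muHat x (ρ (N + k)) := by
    have := A.runList_muHat hp' hx
    rw [A.muHat_of_layer_eq_succ hp, hμ, hρ.runList_muHat hx k fun i hi _ => hge i hi,
      A.muHat_of_layer_eq_succ hlp'] at this
    exact (Option.some_inj.1 this).symm
  have hnx' : A.semPrio (ρ (N + k)) (w (N + k)) = x := hnx
  refine hno _ hn hnx (opportunity_of_safeInf (p := p') (by rw [hlp', hnx']) (by rw [hμ', hnx']) ?_)
  rw [hlp', ← wordDrop_wordDrop]
  exact hsafe.drop_of_runList hp.le hp'

theorem IsSemRun.isTrap (hρ : A.IsSemRun w q0 ρ) {x N : ℕ} (hx : 1 ≤ x)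
    (hge : ∀ n, N ≤ n → x ≤ A.runPrios w ρ n) (hfreq : ∃ᶠ n in atTop, A.runPrios w ρ n = x)
    (hno : ∀ n, N ≤ n → A.runPrios w ρ n = x → ¬ A.Opportunity w n (ρ n)) :
    A.IsTrap w q0 N (A.muHat x (ρ N)) := by
  have hxN : x ≤ A.layer (ρ N) := (hge N le_rfl).trans (A.layerOf_le_layer _ _)
  have hlt : A.layer (A.muHat x (ρ N)) = x := A.layer_muHat _ hx hxN
  refine ⟨?_, ?_, fun n p hp hrun => ?_⟩
  · rw [A.muHat_muHat _ hx hx hxN]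
    exact hρ.runList_muHat_one N
  · rw [hlt, safeInf_muHat_iff A _ hx]
    exact hρ.safeInf hx hge
  · rw [hlt] at hp
    rw [hρ.runList_muHat hx n fun i hi _ => hge i hi] at hrun
    rw [hp, wordDrop_wordDrop]
    exact hρ.not_safeInf_of_not_opportunity (fun i hi => hge i (by omega)) hfreq
      (fun i hi => hno i (by omega)) hp (Option.some_inj.1 hrun).symm

theorem IsSemRun.exists_isTrap (hρ : A.IsSemRun w q0 ρ)
    (h : ∀ᶠ n in atTop, A.runPrios w ρ n = minInfOften (A.runPrios w ρ) →
      A.Opportunity w n (ρ n) → A.Upgrade w n (ρ n) (ρ (n + 1))) :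
    ∃ n t, A.layer t = minInfOften (A.runPrios w ρ) ∧ A.IsTrap w q0 n t := by
  set x := minInfOften (A.runPrios w ρ)
  have hfreq : ∃ᶠ n in atTop, A.runPrios w ρ n = x :=
    frequently_eq_minInfOften fun n => A.semPrio_le _ _
  have hx : 1 ≤ x := by
    obtain ⟨n, hn⟩ := hfreq.exists
    exact hn ▸ A.one_le_layerOf _ _
  obtain ⟨N, hN⟩ := eventually_atTop.1
    ((eventually_minInfOften_le _).and (h.and hρ.eventually_not_upgrade))
  exact ⟨N, _, A.layer_muHat _ hx ((hN N le_rfl).1.trans (A.layerOf_le_layer _ _)),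
    hρ.isTrap hx (fun n hn => (hN n hn).1) hfreq
      fun n hn hnx hopp => (hN n hn).2.2 ((hN n hn).2.1 hnx hopp)⟩

end TrapOfRun

section Game

variable (w : ℕ → α) (q0 : Q)

/-- The length of the history `h` is the current time. -/
def greedy (h : List (Q × α)) (q : Q) (a : α) : Q :=
  if hx : ∃ q', A.semStep q a q' ∧ A.Upgrade w h.length q q' then hx.choose
  else (A.exists_semStep q a).choose

theorem semStep_greedy (h : List (Q × α)) (q : Q) (a : α) : A.semStep q a (A.greedy w h q a) := by
  unfold greedy
  split_ifs with hx
  exacts [hx.choose_spec.1, (A.exists_semStep q a).choose_spec]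

theorem upgrade_greedy {h : List (Q × α)} {n : ℕ} (hlen : h.length = n) {q : Q}
    (hopp : A.Opportunity w n q) : A.Upgrade w n q (A.greedy w h q (w n)) := by
  subst hlen
  have hx : ∃ q', A.semStep q (w h.length) q' ∧ A.Upgrade w h.length q q' := hopp
  rw [greedy, dif_pos hx]
  exact hx.choose_spec.2

theorem semAccept_of_forall_isTrap_even (htraps : ∀ n t, A.IsTrap w q0 n t → Even (A.layer t)) :
    A.SemAccept q0 w := by
  refine ⟨A.greedy w, fun h q a _ => A.semStep_greedy w h q a, fun ρ hρ hσ => ?_⟩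
  by_contra hpar
  obtain ⟨n, t, hlt, ht⟩ := hρ.exists_isTrap (Eventually.of_forall fun n hn hopp => by
    have hodd : Odd (A.runPrios w ρ n) := hn ▸ Nat.not_even_iff_odd.1 hpar
    rw [hσ n hodd]
    exact A.upgrade_greedy w List.length_ofFn hopp)
  exact hpar (by rw [ParityAccept, ← hlt]; exact htraps n t ht)

def greedyPlay (σ : List (Q × α) → Q → α → Q) : ℕ → Q × List (Q × α)
  | 0 => (q0, [])
  | n + 1 =>
    let p := greedyPlay σ n
    (if Odd (A.semPrio p.1 (w n)) then σ p.2 p.1 (w n) else A.greedy w p.2 p.1 (w n),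
      p.2 ++ [(p.1, w n)])

theorem greedyPlay_snd (σ : List (Q × α) → Q → α → Q) (n : ℕ) :
    (A.greedyPlay w q0 σ n).2 = List.ofFn fun j : Fin n => ((A.greedyPlay w q0 σ j).1, w j) := by
  induction n with
  | zero => rfl
  | succ n ih =>
    rw [List.ofFn_succ', List.concat_eq_append]
    change (A.greedyPlay w q0 σ n).2 ++ _ = _
    rw [ih]
    rfl

theorem not_semAccept_of_forall_isTrap_odd (htraps : ∀ n t, A.IsTrap w q0 n t → Odd (A.layer t)) :
    ¬ A.SemAccept q0 w := by
  rintro ⟨σ, hσ, hwin⟩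
  set ρ := fun n => (A.greedyPlay w q0 σ n).1
  have hstep (n : ℕ) : ρ (n + 1) = if Odd (A.semPrio (ρ n) (w n))
      then σ (List.ofFn fun j : Fin n => (ρ j, w j)) (ρ n) (w n)
      else A.greedy w (List.ofFn fun j : Fin n => (ρ j, w j)) (ρ n) (w n) := by
    simp only [ρ, greedyPlay, ← greedyPlay_snd]
  have hρ : A.IsSemRun w q0 ρ := ⟨rfl, fun n => by
    rw [hstep]
    split_ifs with ho
    exacts [hσ _ _ _ ho, A.semStep_greedy w _ _ _]⟩
  have hpar := hwin ρ hρ fun n ho => by rw [hstep, if_pos ho]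
  obtain ⟨n, t, hlt, ht⟩ := hρ.exists_isTrap (Eventually.of_forall fun n hn hopp => by
    have heven : ¬ Odd (A.runPrios w ρ n) := hn ▸ Nat.not_odd_iff_even.2 hpar
    rw [hstep, if_neg (show ¬ Odd (A.semPrio (ρ n) (w n)) from heven)]
    exact A.upgrade_greedy w List.length_ofFn hopp)
  rw [ParityAccept, ← hlt] at hpar
  exact Nat.not_odd_iff_even.2 hpar (htraps n t ht)

variable {A w q0}

theorem IsTrap.semAccept_iff (hcons : A.Consistent) {n : ℕ} {t : Q} (ht : A.IsTrap w q0 n t) :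
    A.SemAccept q0 w ↔ Even (A.layer t) := by
  refine ⟨fun hacc => by_contra fun he => ?_, fun he => ?_⟩
  · exact A.not_semAccept_of_forall_isTrap_odd w q0 (fun n' t' ht' => Nat.not_even_iff_odd.1
      fun he' => he ((ht.even_layer_iff hcons ht').2 he')) hacc
  · exact A.semAccept_of_forall_isTrap_even w q0 fun n' t' ht' => (ht.even_layer_iff hcons ht').1 he

end Game

section RandomWalk

variable {A}

theorem semStep_of_stepProb_ne_zero {p q : Q} {a : α} (h : A.stepProb p a q ≠ 0) :
    A.semStep p a q :=
  by_contra fun hn => h (if_neg hn)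

theorem sum_stepProb_le_one [Fintype Q] (p : Q) (a : α) : ∑ q, A.stepProb p a q ≤ 1 := by
  have : ∑ q, A.stepProb p a q =
      ∑ q with A.semStep p a q, (Nat.card {q // A.semStep p a q} : ℝ≥0∞)⁻¹ := by
    rw [Finset.sum_filter]; rfl
  rw [this, Finset.sum_const, nsmul_eq_mul, Nat.card_eq_fintype_card, Fintype.card_subtype]
  exact ENNReal.mul_inv_le_one _

theorem inv_card_le_stepProb [Fintype Q] {p q : Q} {a : α} (h : A.semStep p a q) :
    (Fintype.card Q : ℝ≥0∞)⁻¹ ≤ A.stepProb p a q := by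
  rw [stepProb, if_pos h, ENNReal.inv_le_inv, Nat.cast_le, ← Nat.card_eq_fintype_card]
  exact Finite.card_subtype_le _

variable [MeasurableSpace Q] {w : ℕ → α} {q0 : Q} {m : Measure (ℕ → Q)}

theorem IsWalkMeasure.isMarkovMeasure (hm : A.IsWalkMeasure w q0 m) :
    IsMarkovMeasure (fun n p q => A.stepProb p (w n) q) q0 m :=
  hm.2

theorem IsWalkMeasure.ae_isSemRun [Countable Q] (hm : A.IsWalkMeasure w q0 m) :
    ∀ᵐ ρ ∂m, A.IsSemRun w q0 ρ :=
  hm.isMarkovMeasure.ae_start_eq_and_weight_ne_zero.mono fun _ h =>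
    ⟨h.1, fun n => semStep_of_stepProb_ne_zero (h.2 n)⟩

/-- Each opportunity is taken with probability at least `1 / |Q|`, so almost surely
opportunities stop together with upgrades. -/
theorem IsWalkMeasure.ae_exists_isTrap [Fintype Q] (hm : A.IsWalkMeasure w q0 m) :
    ∀ᵐ ρ ∂m, ∃ n t, A.layer t = minInfOften (A.runPrios w ρ) ∧ A.IsTrap w q0 n t := by
  filter_upwards [hm.ae_isSemRun, hm.isMarkovMeasure.ae_frequently_good
    (fun n p => A.Opportunity w n p) (fun n p q => A.Upgrade w n p q)
    (fun _ p => sum_stepProb_le_one p _) (ENNReal.inv_ne_zero.2 (ENNReal.natCast_ne_top _))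
    fun _ _ ⟨q, hq, hup⟩ => ⟨q, hup, inv_card_le_stepProb hq⟩] with ρ hρ hgood
  have hno : ∀ᶠ n in atTop, ¬ A.Opportunity w n (ρ n) :=
    not_frequently.1 fun h => not_frequently.2 hρ.eventually_not_upgrade (hgood h)
  exact hρ.exists_isTrap (hno.mono fun _ hn _ hopp => absurd hopp hn)

end RandomWalk

end Layered

end

theorem statement_3_general {Q α : Type} [Fintype Q] [MeasurableSpace Q] {d : ℕ}
    (A : Layered Q α d) (hcons : A.Consistent) (q0 : Q)
    (w : ℕ → α) (m : MeasureTheory.Measure (ℕ → Q)) (hm : A.IsWalkMeasure w q0 m) :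
    (A.SemAccept q0 w → m {ρ : ℕ → Q | ParityAccept (A.runPrios w ρ)} = 1) ∧
    (¬ A.SemAccept q0 w → m {ρ : ℕ → Q | ParityAccept (A.runPrios w ρ)} = 0) := by
  have hae : ∀ᵐ ρ ∂m, ParityAccept (A.runPrios w ρ) ↔ A.SemAccept q0 w := by
    filter_upwards [hm.ae_exists_isTrap] with ρ ⟨n, t, hlt, ht⟩
    rw [ht.semAccept_iff hcons, hlt, ParityAccept]
  have : IsProbabilityMeasure m := hm.1
  refine ⟨fun hacc => ?_, fun hrej => ?_⟩
  · exact (measure_congr (ae_eq_univ.2 (ae_iff.1 (hae.mono fun _ h => h.2 hacc)))).trans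
      measure_univ
  · exact measure_eq_zero_iff_ae_notMem.2 (hae.mono fun _ h hp => hrej (h.1 hp))

/-- For a consistent layered automaton `A`, the automaton `⟦A⟧` is
0-1 probabilistic: the random walk over a word `w` produces an accepting run with
probability `1` if `w ∈ L(⟦A⟧)`, and with probability `0` if `w ∉ L(⟦A⟧)`. -/
theorem statement_3 {Q α : Type} [Fintype Q] [Fintype α] [Nonempty α] [MeasurableSpace Q]
    {d : ℕ} (hd : 1 ≤ d)
    (A : Layered Q α d) (hcons : A.Consistent)
    (q0 : Q) (hq0 : A.IsLeaf q0) (hq0' : A.muHat 1 q0 = A.init)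
    (w : ℕ → α) (m : MeasureTheory.Measure (ℕ → Q)) (hm : A.IsWalkMeasure w q0 m) :
    (A.SemAccept q0 w → m {ρ : ℕ → Q | ParityAccept (A.runPrios w ρ)} = 1) ∧
    (¬ A.SemAccept q0 w → m {ρ : ℕ → Q | ParityAccept (A.runPrios w ρ)} = 0) :=
  statement_3_general A hcons q0 w m hm
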